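/- Let n ≥ 3 be an odd integer. Then V((n−1)/2, n) = (n+1)/2 and V(n−2, n) = (n+1)/2. -/

import Mathlib

/-- `(x, y) ∈ ℤ²` lies in the interior of the lattice parallelogram
`P_{a,n} = {t₁·(1,0) + t₂·(a,n) : 0 ≤ t₁, t₂ ≤ 1}`. -/
def inInteriorP (a n : ℤ) (p : ℤ × ℤ) : Prop :=
  ∃ t₁ t₂ : ℝ, 0 < t₁ ∧ t₁ < 1 ∧ 0 < t₂ ∧ t₂ < 1 ∧
    (p.1 : ℝ) = t₁ + t₂ * (a : ℝ) ∧ (p.2 : ℝ) = t₂ * (n : ℝ)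

/-- A lattice point `(x, y) ∈ ℤ²` is visible (from the origin) if `gcd(x, y) = 1`. -/
def VisiblePt (p : ℤ × ℤ) : Prop := Int.gcd p.1 p.2 = 1

/-- `V a n` is the number of visible lattice points in the interior of `P_{a,n}`. -/
noncomputable def V (a n : ℤ) : ℕ :=
  {p : ℤ × ℤ | inInteriorP a n p ∧ VisiblePt p}.ncard

/-!
A lattice point `(x, y)` lies in the interior of `P_{a,n}` iff `0 < y < n` and
`a y < n x < a y + n`, so every row `0 < y < n` carries exactly one interior point, and `V a n`
counts the rows whose point is visible.

For `n = 2m + 1` and `a = m` the point in row `y` is `((y + 1) / 2, y)`: for `y = 2k` it is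
`k • (1, 2)`, visible only when `k = 1`, while for odd `y` it is `(k + 1, 2k + 1)`, always
visible.
For `a = 2m - 1` it is `(y, y)` when `y ≤ m`, visible only for `y = 1`, and `(y - 1, y)` when
`y > m`, always visible. Either way `m + 1` of the `2m` rows count.
-/

open Finset

theorem inInteriorP_iff {a n : ℤ} (hn : 0 < n) {x y : ℤ} :
    inInteriorP a n (x, y) ↔ 0 < y ∧ y < n ∧ a * y < n * x ∧ n * x < a * y + n := by
  have hnR : (0 : ℝ) < n := by exact_mod_cast hn
  constructor
  · rintro ⟨t₁, t₂, ht₁, ht₁', ht₂, ht₂', hx, hy⟩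
    simp only at hx hy
    have hbounds :
        (0 : ℝ) < y ∧ (y : ℝ) < n ∧ (a * y : ℝ) < n * x ∧ (n * x : ℝ) < a * y + n := by
      rw [hx, hy]
      exact ⟨by positivity, by nlinarith, by nlinarith, by nlinarith⟩
    exact_mod_cast hbounds
  · rintro ⟨hy, hyn, hlo, hhi⟩
    have hy : (0 : ℝ) < y := by exact_mod_cast hy
    have hyn : (y : ℝ) < n := by exact_mod_cast hyn
    have hlo : (a * y : ℝ) < n * x := by exact_mod_cast hlo
    have hhi : (n * x : ℝ) < a * y + n := by exact_mod_cast hhi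
    refine ⟨(n * x - a * y) / n, y / n, ?_, ?_, by positivity, ?_, ?_, ?_⟩
    · exact div_pos (by linarith) hnR
    · rw [div_lt_one hnR]; linarith
    · rw [div_lt_one hnR]; exact hyn
    · field_simp; ring
    · field_simp

theorem eq_of_mul_mem_Ioo {n c x x' : ℤ} (hn : 0 < n) (h : c < n * x ∧ n * x < c + n)
    (h' : c < n * x' ∧ n * x' < c + n) : x = x' := by
  have : x - x' < 1 := lt_of_mul_lt_mul_left (by linarith) hn.le
  have : -1 < x - x' := lt_of_mul_lt_mul_left (by linarith) hn.le
  omega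

theorem V_eq_card_filter {a n : ℤ} (hn : 0 < n) (g : ℤ → ℤ)
    (hg : ∀ y ∈ Ioo 0 n, a * y < n * g y ∧ n * g y < a * y + n) :
    V a n = #{y ∈ Ioo 0 n | Int.gcd (g y) y = 1} := by
  have hset : {p : ℤ × ℤ | inInteriorP a n p ∧ VisiblePt p} =
      ↑({y ∈ Ioo 0 n | Int.gcd (g y) y = 1}.image fun y => (g y, y)) := by
    ext ⟨x, y⟩
    simp only [Set.mem_ofPred_eq, inInteriorP_iff hn, VisiblePt, coe_image, coe_filter, mem_Ioo,
      Set.mem_image, Prod.mk.injEq]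
    constructor
    · rintro ⟨⟨hy, hyn, hx⟩, hvis⟩
      obtain rfl := eq_of_mul_mem_Ioo hn hx (hg y (mem_Ioo.2 ⟨hy, hyn⟩))
      exact ⟨y, ⟨⟨hy, hyn⟩, hvis⟩, rfl, rfl⟩
    · rintro ⟨y, ⟨hy, hvis⟩, rfl, rfl⟩
      exact ⟨⟨hy.1, hy.2, hg y (mem_Ioo.2 hy)⟩, hvis⟩
  rw [V, hset, Set.ncard_coe_finset, card_image_of_injective _ fun y y' h => congrArg Prod.snd h]

theorem gcd_add_one_ediv_two_self_eq_one_iff {y : ℤ} (hy : 0 < y) :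
    Int.gcd ((y + 1) / 2) y = 1 ↔ y = 2 ∨ Odd y := by
  rcases Int.even_or_odd' y with ⟨k, rfl | rfl⟩
  · rw [show (2 * k + 1) / 2 = k by omega, Int.gcd_mul_left_right]
    simp only [Int.not_odd_iff_even.2 (even_two_mul k), or_false]
    omega
  · rw [show (2 * k + 1 + 1) / 2 = k + 1 by omega,
      Int.isCoprime_iff_gcd_eq_one.mp ⟨2, -1, by ring⟩]
    simp

theorem V_self_two_mul_add_one (m : ℤ) (hm : 0 < m) : (V m (2 * m + 1) : ℤ) = m + 1 := by
  rw [V_eq_card_filter (by omega) (fun y => (y + 1) / 2)]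
  · have hfilter : {y ∈ Ioo 0 (2 * m + 1) | Int.gcd ((y + 1) / 2) y = 1} =
        insert 2 ((Ico 0 m).image fun k => 2 * k + 1) := by
      ext y
      simp only [mem_filter, mem_Ioo, mem_insert, mem_image, mem_Ico]
      constructor
      · rintro ⟨⟨hy, hyn⟩, hvis⟩
        rcases (gcd_add_one_ediv_two_self_eq_one_iff hy).1 hvis with rfl | ⟨k, rfl⟩
        · exact .inl rfl
        · exact .inr ⟨k, by omega, rfl⟩
      · rintro (rfl | ⟨k, hk, rfl⟩)
        · exact ⟨by omega, (gcd_add_one_ediv_two_self_eq_one_iff two_pos).2 (.inl rfl)⟩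
        · refine ⟨by omega, (gcd_add_one_ediv_two_self_eq_one_iff (by omega)).2 ?_⟩
          exact .inr ⟨k, rfl⟩
    have h2 : 2 ∉ (Ico 0 m).image fun k => 2 * k + 1 := by
      simp only [mem_image, mem_Ico, not_exists, not_and, and_imp]
      omega
    rw [hfilter, card_insert_of_notMem h2,
      card_image_of_injective _ fun k k' h => by simpa using h, Int.card_Ico]
    omega
  · intro y hy
    rw [mem_Ioo] at hy
    rcases Int.even_or_odd' y with ⟨k, rfl | rfl⟩
    · rw [show (2 * k + 1) / 2 = k by omega]
      constructor <;> nlinarith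
    · rw [show (2 * k + 1 + 1) / 2 = k + 1 by omega]
      constructor <;> nlinarith

theorem gcd_ite_self_eq_one_iff {m y : ℤ} (hy : 0 < y) :
    Int.gcd (if y ≤ m then y else y - 1) y = 1 ↔ y = 1 ∨ m < y := by
  split_ifs with h
  · rw [Int.gcd_self]; omega
  · rw [Int.gcd_self_sub_left, Int.gcd_one_left]; omega

theorem V_two_mul_sub_one_two_mul_add_one (m : ℤ) (hm : 0 < m) :
    (V (2 * m - 1) (2 * m + 1) : ℤ) = m + 1 := by
  rw [V_eq_card_filter (by omega) (fun y => if y ≤ m then y else y - 1)]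
  · have hfilter : {y ∈ Ioo 0 (2 * m + 1) | Int.gcd (if y ≤ m then y else y - 1) y = 1} =
        insert 1 (Ioc m (2 * m)) := by
      ext y
      simp only [mem_filter, mem_Ioo, mem_insert, mem_Ioc]
      constructor
      · rintro ⟨⟨hy, hyn⟩, hvis⟩
        have := (gcd_ite_self_eq_one_iff hy).1 hvis
        omega
      · intro h
        have hy : 0 < y := by omega
        exact ⟨by omega, (gcd_ite_self_eq_one_iff hy).2 (by omega)⟩
    have h1 : 1 ∉ Ioc m (2 * m) := by
      simp only [mem_Ioc, not_and, not_le]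
      omega
    rw [hfilter, card_insert_of_notMem h1, Int.card_Ioc]
    omega
  · intro y hy
    rw [mem_Ioo] at hy
    split_ifs with h
    · constructor <;> nlinarith
    · constructor <;> nlinarith

/-- For odd `n ≥ 3`: `V((n−1)/2, n) = (n+1)/2` and `V(n−2, n) = (n+1)/2`. -/
theorem V_half (n : ℤ) (hn : 3 ≤ n) (hodd : Odd n) :
    2 * (V ((n - 1) / 2) n : ℤ) = n + 1 ∧ 2 * (V (n - 2) n : ℤ) = n + 1 := by
  obtain ⟨m, rfl⟩ := hodd
  rw [show (2 * m + 1 - 1) / 2 = m by omega, show 2 * m + 1 - 2 = 2 * m - 1 by ring,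
    V_self_two_mul_add_one m (by omega), V_two_mul_sub_one_two_mul_add_one m (by omega)]
  omega
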